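/- Call a natural transformation η : F ⟶ G between functors from commutative rings to sets locally of finite presentation if for every filtered category J and every functor R : J ⥤ CommRing, the canonical map colim_j F(R_j) → F(colim_j R_j) ×_{G(colim_j R_j)} colim_j G(R_j), induced by the colimit comparison maps, is a bijection. Let F, G, H : CommRing ⥤ Set be functors, η : F ⟶ G a natural transformation that is locally of finite presentation, and θ : H ⟶ G an arbitrary natural transformation. Let F ×_G H be the pointwise fiber product functor, (F ×_G H)(R) = {(x,y) ∈ F(R) × H(R) : η_R(x) = θ_R(y)}. Then the second projection F ×_G H ⟶ H is locally of finite presentation. -/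

import Mathlib

open CategoryTheory CategoryTheory.Limits

universe u

namespace LFP

/-- The canonical comparison map `colim_j F(R_j) → F(colim_j R_j)`. -/
noncomputable def colimitComparison (F : CommRingCat.{u} ⥤ Type u) {J : Type u}
    [SmallCategory J] [IsFiltered J] (R : J ⥤ CommRingCat.{u}) :
    colimit (R ⋙ F) ⟶ F.obj (colimit R) :=
  colimit.desc (R ⋙ F) (F.mapCocone (colimit.cocone R))

/-- The canonical map `colim_j F(R_j) → F(colim R) ×_{G(colim R)} colim_j G(R_j)` induced by
the colimit comparison maps and a natural transformation `η : F ⟶ G`. -/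
noncomputable def comparisonToFiberProduct {F G : CommRingCat.{u} ⥤ Type u} (η : F ⟶ G)
    {J : Type u} [SmallCategory J] [IsFiltered J] (R : J ⥤ CommRingCat.{u}) :
    colimit (R ⋙ F) →
      { p : F.obj (colimit R) × colimit (R ⋙ G) //
          η.app (colimit R) p.1 = colimitComparison G R p.2 } :=
  fun x =>
    ⟨(colimitComparison F R x, colimMap (Functor.whiskerLeft R η) x), by
      have h : colimitComparison F R ≫ η.app (colimit R)
          = colimMap (Functor.whiskerLeft R η) ≫ colimitComparison G R := by
        apply colimit.hom_ext
        intro j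
        simp only [colimitComparison, colimit.ι_desc_assoc, Functor.mapCocone_ι_app,
          Functor.comp_obj, colimit.cocone_ι, ι_colimMap_assoc, Functor.whiskerLeft_app,
          colimit.ι_desc]
        exact η.naturality (colimit.ι R j)
      simpa only [types_comp_apply] using types_congr_hom h x⟩

/-- A natural transformation `η : F ⟶ G` of set-valued functors on commutative rings is
*locally of finite presentation* if for every filtered category `J` and every functor
`R : J ⥤ CommRing`, the canonical map
`colim_j F(R_j) → F(colim R) ×_{G(colim R)} colim_j G(R_j)` is a bijection. -/
def IsLocallyFinitelyPresented {F G : CommRingCat.{u} ⥤ Type u} (η : F ⟶ G) : Prop :=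
  ∀ (J : Type u) (_ : SmallCategory J) (_ : IsFiltered J) (R : J ⥤ CommRingCat.{u}),
    Function.Bijective (comparisonToFiberProduct η R)

/-- The pointwise fiber product functor `F ×_G H` of `η : F ⟶ G` and `θ : H ⟶ G`. -/
def fiberProductFunctor {F G H : CommRingCat.{u} ⥤ Type u} (η : F ⟶ G) (θ : H ⟶ G) :
    CommRingCat.{u} ⥤ Type u where
  obj R := { p : F.obj R × H.obj R // η.app R p.1 = θ.app R p.2 }
  map {R S} f := TypeCat.ofHom fun p =>
    ⟨(F.map f p.val.1, H.map f p.val.2), by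
      have h1 := types_congr_hom (η.naturality f) p.val.1
      have h2 := types_congr_hom (θ.naturality f) p.val.2
      simp only [types_comp_apply] at h1 h2
      rw [h1, h2, p.property]⟩
  map_id R := by
    refine ConcreteCategory.hom_ext _ _ fun p => ?_
    apply Subtype.ext
    simp
  map_comp {R S T} f g := by
    refine ConcreteCategory.hom_ext _ _ fun p => ?_
    apply Subtype.ext
    simp

/-- The second projection `F ×_G H ⟶ H`. -/
def fiberProductSnd {F G H : CommRingCat.{u} ⥤ Type u} (η : F ⟶ G) (θ : H ⟶ G) :
    fiberProductFunctor η θ ⟶ H where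
  app R := TypeCat.ofHom fun p => p.val.2
  naturality R S f := rfl

end LFP

open LFP

/-! Filtered colimits of sets commute with fiber products, so `colim_j (F ×_G H)(R_j)` is
`colim_j F(R_j) ×_{colim_j G(R_j)} colim_j H(R_j)`. Under this identification the comparison map
of the projection `F ×_G H ⟶ H` is the base change of the comparison map of `η` along
`colim_j H(R_j) → colim_j G(R_j)`, and a base change of a bijection is a bijection. -/

namespace LFP

section FilteredColimits

variable {J : Type u} [SmallCategory J]

lemma ι_colimMap_apply {K L : J ⥤ Type u} (α : K ⟶ L) (j : J) (x : K.obj j) :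
    colimMap α (colimit.ι K j x) = colimit.ι L j (α.app j x) :=
  types_congr_hom (ι_colimMap α j) x

variable [IsFiltered J] (R : J ⥤ CommRingCat.{u})

lemma colimitComparison_ι_apply (F : CommRingCat.{u} ⥤ Type u) (j : J) (x : F.obj (R.obj j)) :
    colimitComparison F R (colimit.ι (R ⋙ F) j x) = F.map (colimit.ι R j) x :=
  colimit.ι_desc_apply (F.mapCocone (colimit.cocone R)) j x

lemma colimitComparison_naturality_apply {F G : CommRingCat.{u} ⥤ Type u} (α : F ⟶ G)
    (x : colimit (R ⋙ F)) :
    α.app (colimit R) (colimitComparison F R x)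
      = colimitComparison G R (colimMap (Functor.whiskerLeft R α) x) := by
  obtain ⟨j, x, rfl⟩ := Types.jointly_surjective' x
  rw [colimitComparison_ι_apply, ι_colimMap_apply, colimitComparison_ι_apply]
  exact NatTrans.naturality_apply α (colimit.ι R j) x

end FilteredColimits

section FiberProduct

variable {F G H : CommRingCat.{u} ⥤ Type u} (η : F ⟶ G) (θ : H ⟶ G)

def fiberProductFst : fiberProductFunctor η θ ⟶ F where
  app _ := TypeCat.ofHom fun p => p.val.1
  naturality _ _ _ := rfl

variable {J : Type u} [SmallCategory J] (R : J ⥤ CommRingCat.{u})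

lemma colimMap_fiberProduct_condition_apply (w : colimit (R ⋙ fiberProductFunctor η θ)) :
    colimMap (Functor.whiskerLeft R η) (colimMap (Functor.whiskerLeft R (fiberProductFst η θ)) w)
      = colimMap (Functor.whiskerLeft R θ)
          (colimMap (Functor.whiskerLeft R (fiberProductSnd η θ)) w) := by
  obtain ⟨j, p, rfl⟩ := Types.jointly_surjective' w
  simp only [ι_colimMap_apply]
  exact congrArg (colimit.ι (R ⋙ G) j) p.property

variable [IsFiltered J]

lemma colimitComparison_fiberProduct_apply (w : colimit (R ⋙ fiberProductFunctor η θ)) :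
    (colimitComparison (fiberProductFunctor η θ) R w).val
      = (colimitComparison F R (colimMap (Functor.whiskerLeft R (fiberProductFst η θ)) w),
          colimitComparison H R (colimMap (Functor.whiskerLeft R (fiberProductSnd η θ)) w)) := by
  rw [← colimitComparison_naturality_apply, ← colimitComparison_naturality_apply]
  rfl

lemma colimMap_fiberProductFst_snd_injective :
    Function.Injective fun w : colimit (R ⋙ fiberProductFunctor η θ) =>
      (colimMap (Functor.whiskerLeft R (fiberProductFst η θ)) w,
        colimMap (Functor.whiskerLeft R (fiberProductSnd η θ)) w) := by
  intro w w' h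
  obtain ⟨j, p, p', rfl, rfl⟩ :=
    Types.FilteredColimit.jointly_surjective_of_isColimit₂ (colimit.isColimit _) w w'
  simp only [colimit.cocone_ι] at h ⊢
  rw [Prod.mk.injEq, ι_colimMap_apply, ι_colimMap_apply, ι_colimMap_apply, ι_colimMap_apply] at h
  obtain ⟨k₁, f₁, hf₁⟩ := (Types.FilteredColimit.isColimit_eq_iff' (colimit.isColimit _) _ _).1 h.1
  obtain ⟨k₂, f₂, hf₂⟩ := (Types.FilteredColimit.isColimit_eq_iff' (colimit.isColimit _) _ _).1 h.2
  obtain ⟨k, g₁, g₂, hg⟩ := IsFiltered.span f₁ f₂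
  refine Types.colimit_sound' (f₁ ≫ g₁) (f₁ ≫ g₁) (Subtype.ext (Prod.ext ?_ ?_))
  · change F.map (R.map (f₁ ≫ g₁)) p.val.1 = F.map (R.map (f₁ ≫ g₁)) p'.val.1
    rw [R.map_comp, Functor.map_comp_apply, Functor.map_comp_apply]
    exact congrArg (F.map (R.map g₁)) hf₁
  · change H.map (R.map (f₁ ≫ g₁)) p.val.2 = H.map (R.map (f₁ ≫ g₁)) p'.val.2
    rw [hg, R.map_comp, Functor.map_comp_apply, Functor.map_comp_apply]
    exact congrArg (H.map (R.map g₂)) hf₂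

lemma exists_colimMap_fiberProductFst_snd_eq (x : colimit (R ⋙ F)) (z : colimit (R ⋙ H))
    (h : colimMap (Functor.whiskerLeft R η) x = colimMap (Functor.whiskerLeft R θ) z) :
    ∃ w : colimit (R ⋙ fiberProductFunctor η θ),
      colimMap (Functor.whiskerLeft R (fiberProductFst η θ)) w = x ∧
        colimMap (Functor.whiskerLeft R (fiberProductSnd η θ)) w = z := by
  obtain ⟨i, x, rfl⟩ := Types.jointly_surjective' x
  obtain ⟨j, z, rfl⟩ := Types.jointly_surjective' z
  rw [ι_colimMap_apply, ι_colimMap_apply] at h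
  obtain ⟨k, f, g, hfg⟩ := (Types.FilteredColimit.colimit_eq_iff (R ⋙ G)).1 h
  have hk : η.app (R.obj k) (F.map (R.map f) x) = θ.app (R.obj k) (H.map (R.map g) z) := by
    rw [NatTrans.naturality_apply, NatTrans.naturality_apply]
    exact hfg
  refine ⟨colimit.ι (R ⋙ fiberProductFunctor η θ) k
    (⟨(F.map (R.map f) x, H.map (R.map g) z), hk⟩ : (R ⋙ fiberProductFunctor η θ).obj k), ?_, ?_⟩
  · exact (ι_colimMap_apply _ k _).trans (colimit.w_apply (R ⋙ F) f x)
  · exact (ι_colimMap_apply _ k _).trans (colimit.w_apply (R ⋙ H) g z)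

lemma comparisonToFiberProduct_fiberProductSnd_injective
    (hη : Function.Injective (comparisonToFiberProduct η R)) :
    Function.Injective (comparisonToFiberProduct (fiberProductSnd η θ) R) := by
  intro w w' h
  have hsnd : colimMap (Functor.whiskerLeft R (fiberProductSnd η θ)) w
      = colimMap (Functor.whiskerLeft R (fiberProductSnd η θ)) w' :=
    congrArg (fun t => t.val.2) h
  have hcomp := congrArg (fun t => t.val.1.val) h
  simp only [comparisonToFiberProduct, colimitComparison_fiberProduct_apply] at hcomp
  have hfst : colimMap (Functor.whiskerLeft R (fiberProductFst η θ)) w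
      = colimMap (Functor.whiskerLeft R (fiberProductFst η θ)) w' := by
    refine hη (Subtype.ext (Prod.ext ?_ ?_))
    · exact (Prod.ext_iff.1 hcomp).1
    change colimMap (Functor.whiskerLeft R η) _ = colimMap (Functor.whiskerLeft R η) _
    rw [colimMap_fiberProduct_condition_apply, colimMap_fiberProduct_condition_apply, hsnd]
  exact colimMap_fiberProductFst_snd_injective η θ R (Prod.ext hfst hsnd)

lemma comparisonToFiberProduct_fiberProductSnd_surjective
    (hη : Function.Surjective (comparisonToFiberProduct η R)) :
    Function.Surjective (comparisonToFiberProduct (fiberProductSnd η θ) R) := by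
  rintro ⟨⟨p, z⟩, hz⟩
  obtain ⟨x, hx⟩ := hη ⟨(p.val.1, colimMap (Functor.whiskerLeft R θ) z), by
    rw [p.property, ← colimitComparison_naturality_apply]
    exact congrArg (θ.app (colimit R)) hz⟩
  obtain ⟨w, hw₁, hw₂⟩ :=
    exists_colimMap_fiberProductFst_snd_eq η θ R x z (congrArg (fun t => t.val.2) hx)
  refine ⟨w, Subtype.ext (Prod.ext (Subtype.ext ?_) hw₂)⟩
  change (colimitComparison (fiberProductFunctor η θ) R w).val = p.val
  rw [colimitComparison_fiberProduct_apply, hw₁, hw₂, ← hz]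
  exact Prod.ext (congrArg (fun t => t.val.1) hx) rfl

end FiberProduct

end LFP

open LFP

/-- If `η : F ⟶ G` is locally of finite presentation and `θ : H ⟶ G` is
arbitrary, then the second projection `F ×_G H ⟶ H` of the pointwise fiber product functor
is locally of finite presentation. -/
theorem isLocallyFinitelyPresented_fiberProductSnd
    {F G H : CommRingCat.{u} ⥤ Type u} (η : F ⟶ G) (θ : H ⟶ G)
    (hη : IsLocallyFinitelyPresented η) :
    IsLocallyFinitelyPresented (fiberProductSnd η θ) := fun J _ _ R =>
  ⟨comparisonToFiberProduct_fiberProductSnd_injective η θ R (hη J _ _ R).1,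
    comparisonToFiberProduct_fiberProductSnd_surjective η θ R (hη J _ _ R).2⟩
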